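/- arXiv:1106.3116 — 2 statements merged into one kernel-verified Lean document; each statement's English description precedes it below -/
import Mathlib

section
/- Let κ > 0, let c = (c_1,…,c_q) ∈ ℝ^q, and let c′ = (c′_1,…,c′_q) := π_κ(c) be its metric projection onto κ·P^{q−1}. Suppose c′ belongs to relint(κ·τ_J) for an ordered partition J = (J_1,…,J_s) of {1,…,q}. Then there exist real numbers t_1 ≤ t_2 ≤ … ≤ t_s such that c_j − c′_j = t_k for every k ∈ {1,…,s} and every j ∈ J_k. -/
/-!
The projection `c'` is characterised by the variational inequality `⟪c - c', y - c'⟫ ≤ 0` for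
all `y ∈ κ • P`. Exchanging the coordinates `j, j'` of a vertex `P_π` moves it by a multiple of
`e_j - e_{j'}`. If `j, j'` lie in the same block, the exchanged vertex is again a vertex of `τ_J`,
so `e_j - e_{j'}` is parallel to the face; as `c'` lies in its relative interior, the inequality
holds in both directions and `c_j - c'_j = c_{j'} - c'_{j'}`. If `j ∈ J_k`, `j' ∈ J_l` with
`k < l`, the exchange moves every vertex of `τ_J` by at least one full step `e_j - e_{j'}`, so
`τ_J + (e_j - e_{j'}) ⊆ P` by convexity, and the inequality gives
`c_j - c'_j ≤ c_{j'} - c'_{j'}`.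
-/

open Set Pointwise

noncomputable section

/-- The vertex `P_ρ` of the permutohedron: the point whose `ρ(k)`-th coordinate is
`k − (q+1)/2` (with `k` running through `1,…,q`, here 0-indexed as `Fin q`). -/
def vertexPoint (q : ℕ) (ρ : Equiv.Perm (Fin q)) : EuclideanSpace ℝ (Fin q) :=
  WithLp.toLp 2 (fun i => ((ρ.symm i : ℕ) + 1 : ℝ) - ((q : ℝ) + 1) / 2)

/-- The permutohedron `P^{q−1} ⊂ ℝ^q`: the convex hull of the points `P_ρ`. -/
def permutohedron (q : ℕ) : Set (EuclideanSpace ℝ (Fin q)) :=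
  convexHull ℝ (Set.range (vertexPoint q))

/-- An ordered partition `J = (J_1,…,J_s)` of `{1,…,q}` into `s` nonempty subsets. -/
structure OrderedPartition (q s : ℕ) where
  blocks : Fin s → Finset (Fin q)
  nonempty : ∀ k, (blocks k).Nonempty
  disjoint : ∀ k l, k ≠ l → Disjoint (blocks k) (blocks l)
  covers : ∀ j : Fin q, ∃ k, j ∈ blocks k

/-- `cumCard J n = r_n`, the total cardinality of the first `n` blocks. -/
def cumCard {q s : ℕ} (J : OrderedPartition q s) (n : ℕ) : ℕ :=
  ∑ i ∈ Finset.univ.filter (fun i : Fin s => (i : ℕ) < n), (J.blocks i).card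

/-- A permutation `π` is compatible with the ordered partition `J` if it maps the
`k`-th consecutive block `{r_{k−1}+1,…,r_k}` (0-indexed: `[r_{k−1}, r_k)`) onto `J_k`;
these are exactly the permutations `σρ` with `σ` in the Young subgroup. -/
def compatiblePerm {q s : ℕ} (J : OrderedPartition q s) (π : Equiv.Perm (Fin q)) : Prop :=
  ∀ (k : Fin s) (i : Fin q),
    π i ∈ J.blocks k ↔ cumCard J (k : ℕ) ≤ (i : ℕ) ∧ (i : ℕ) < cumCard J ((k : ℕ) + 1)

/-- The face `τ_J` of the permutohedron corresponding to the ordered partition `J`. -/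
def face (q s : ℕ) (J : OrderedPartition q s) : Set (EuclideanSpace ℝ (Fin q)) :=
  convexHull ℝ {x | ∃ π : Equiv.Perm (Fin q), compatiblePerm J π ∧ x = vertexPoint q π}

/-- The metric projection onto a set `K`: a point of `K` at minimal distance
(unique when `K` is compact, convex and nonempty in Euclidean space). -/
def metricProj {E : Type*} [MetricSpace E] [Nonempty E] (K : Set E) (c : E) : E :=
  Classical.epsilon fun y => y ∈ K ∧ ∀ z ∈ K, dist c y ≤ dist c z

open scoped RealInnerProductSpace

theorem metricProj_spec {E : Type*} [MetricSpace E] [Nonempty E] {K : Set E}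
    (hK : IsCompact K) (hne : K.Nonempty) (c : E) :
    metricProj K c ∈ K ∧ ∀ z ∈ K, dist c (metricProj K c) ≤ dist c z :=
  Classical.epsilon_spec <|
    hK.exists_isMinOn hne (continuous_const.dist continuous_id).continuousOn

theorem real_inner_sub_metricProj_le_zero {F : Type*} [NormedAddCommGroup F]
    [InnerProductSpace ℝ F] {K : Set F} (hKc : IsCompact K) (hKv : Convex ℝ K)
    (hne : K.Nonempty) (c : F) {y : F} (hy : y ∈ K) :
    ⟪c - metricProj K c, y - metricProj K c⟫ ≤ 0 := by
  obtain ⟨hmem, hmin⟩ := metricProj_spec hKc hne c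
  have : Nonempty K := ⟨⟨_, hmem⟩⟩
  refine (norm_eq_iInf_iff_real_inner_le_zero hKv hmem).1 ?_ y hy
  refine le_antisymm (le_ciInf fun w => ?_)
    (ciInf_le (f := fun w : K => ‖c - w‖) ⟨0, ?_⟩ ⟨_, hmem⟩)
  · simpa only [dist_eq_norm] using hmin w w.2
  · rintro _ ⟨w, rfl⟩
    exact norm_nonneg _

theorem real_inner_eq_zero_of_mem_intrinsicInterior {F : Type*} [NormedAddCommGroup F]
    [InnerProductSpace ℝ F] {A : Set F} {x v d : F} (hx : x ∈ intrinsicInterior ℝ A)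
    (hd : d ∈ (affineSpan ℝ A).direction) (hv : ∀ y ∈ A, ⟪v, y - x⟫ ≤ 0) :
    ⟪v, d⟫ = 0 := by
  obtain ⟨y, hy, rfl⟩ := mem_intrinsicInterior.mp hx
  let line : ℝ → affineSpan ℝ A := fun t =>
    ⟨t • d +ᵥ (y : F), AffineSubspace.vadd_mem_of_mem_direction
      ((affineSpan ℝ A).direction.smul_mem t hd) y.2⟩
  have hline : Continuous line :=
    ((continuous_id.smul continuous_const).add continuous_const).subtype_mk _
  have hnhds : ∀ᶠ t in nhds (0 : ℝ), line t ∈ interior ((↑) ⁻¹' A) :=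
    hline.continuousAt.preimage_mem_nhds (isOpen_interior.mem_nhds (by simpa [line] using hy))
  obtain ⟨ε, hε, hball⟩ := Metric.eventually_nhds_iff.mp hnhds
  have hside : ∀ t : ℝ, |t| < ε → t * ⟪v, d⟫ ≤ 0 := fun t ht => by
    have hmem : line t ∈ ((↑) : affineSpan ℝ A → F) ⁻¹' A :=
      interior_subset (hball (by simpa [Real.dist_eq] using ht))
    simpa [line, real_inner_smul_right] using hv _ hmem
  have hpos := hside (ε / 2) (by rw [abs_of_pos (by positivity)]; linarith)
  have hneg := hside (-(ε / 2)) (by rw [abs_neg, abs_of_pos (by positivity)]; linarith)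
  nlinarith

theorem vertexPoint_trans_swap {q : ℕ} (π : Equiv.Perm (Fin q)) (j j' : Fin q) :
    vertexPoint q (π.trans (Equiv.swap j j')) = vertexPoint q π +
      (((π.symm j' : ℕ) : ℝ) - ((π.symm j : ℕ) : ℝ)) •
        (EuclideanSpace.single j 1 - EuclideanSpace.single j' 1) := by
  ext i
  simp only [vertexPoint, Equiv.symm_trans_apply, Equiv.symm_swap, PiLp.add_apply,
    PiLp.smul_apply, PiLp.sub_apply, PiLp.toLp_apply, PiLp.single_apply, smul_eq_mul]
  rcases eq_or_ne i j with rfl | hij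
  · rcases eq_or_ne i j' with rfl | hij'
    · simp
    · simp [hij']; ring
  · rcases eq_or_ne i j' with rfl | hij'
    · simp [hij]; ring
    · simp [Equiv.swap_apply_of_ne_of_ne hij hij', hij, hij']

theorem real_inner_single_sub_single {ι : Type*} [Fintype ι] [DecidableEq ι]
    (v : EuclideanSpace ℝ ι) (j j' : ι) :
    ⟪v, EuclideanSpace.single j 1 - EuclideanSpace.single j' 1⟫ = v j - v j' := by
  simp [inner_sub_right, EuclideanSpace.inner_single_right]

theorem cumCard_mono {q s : ℕ} (J : OrderedPartition q s) : Monotone (cumCard J) :=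
  fun _ _ hmn => Finset.sum_le_sum_of_subset <|
    Finset.monotone_filter_right _ fun _ _ hi => lt_of_lt_of_le hi hmn

namespace OrderedPartition

variable {q s : ℕ} (J : OrderedPartition q s)

theorem mem_blocks_iff_of_mem_same {k₀ k : Fin s} {j j' : Fin q} (hj : j ∈ J.blocks k₀)
    (hj' : j' ∈ J.blocks k₀) : j ∈ J.blocks k ↔ j' ∈ J.blocks k := by
  rcases eq_or_ne k₀ k with rfl | hne
  · exact iff_of_true hj hj'
  · exact iff_of_false (Finset.disjoint_left.mp (J.disjoint _ _ hne) hj)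
      (Finset.disjoint_left.mp (J.disjoint _ _ hne) hj')

theorem exists_monotone_eq_of_forall_le (f : Fin q → ℝ)
    (hsame : ∀ k, ∀ j ∈ J.blocks k, ∀ j' ∈ J.blocks k, f j = f j')
    (hlt : ∀ k l, k < l → ∀ j ∈ J.blocks k, ∀ j' ∈ J.blocks l, f j ≤ f j') :
    ∃ t : Fin s → ℝ, Monotone t ∧ ∀ k, ∀ j ∈ J.blocks k, f j = t k := by
  choose rep hrep using J.nonempty
  refine ⟨fun k => f (rep k), fun k l hkl => ?_, fun k j hj => hsame k j hj _ (hrep k)⟩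
  rcases hkl.eq_or_lt with rfl | hlt'
  · exact le_rfl
  · exact hlt k l hlt' _ (hrep k) _ (hrep l)

end OrderedPartition

namespace compatiblePerm

variable {q s : ℕ} {J : OrderedPartition q s} {π : Equiv.Perm (Fin q)}

theorem trans_swap (hπ : compatiblePerm J π) {k₀ : Fin s} {j j' : Fin q}
    (hj : j ∈ J.blocks k₀) (hj' : j' ∈ J.blocks k₀) :
    compatiblePerm J (π.trans (Equiv.swap j j')) := by
  intro k i
  rw [← hπ k i, Equiv.trans_apply, Equiv.swap_apply_def]
  split_ifs with h h'
  · rw [h, J.mem_blocks_iff_of_mem_same hj hj']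
  · rw [h', J.mem_blocks_iff_of_mem_same hj hj']
  · rfl

theorem symm_lt_symm (hπ : compatiblePerm J π) {k l : Fin s} (hkl : k < l) {j j' : Fin q}
    (hj : j ∈ J.blocks k) (hj' : j' ∈ J.blocks l) : π.symm j < π.symm j' := by
  have hk := (hπ k (π.symm j)).mp (by simpa using hj)
  have hl := (hπ l (π.symm j')).mp (by simpa using hj')
  have := cumCard_mono J (show (k : ℕ) + 1 ≤ l from hkl)
  rw [Fin.lt_def]
  omega

end compatiblePerm

theorem isCompact_permutohedron (q : ℕ) : IsCompact (permutohedron q) :=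
  (Set.finite_range _).isCompact_convexHull (𝕜 := ℝ)

theorem face_subset_permutohedron {q s : ℕ} (J : OrderedPartition q s) :
    face q s J ⊆ permutohedron q :=
  convexHull_mono <| by rintro _ ⟨π, -, rfl⟩; exact ⟨π, rfl⟩

theorem single_sub_single_mem_direction_affineSpan_smul_face {q s : ℕ}
    {J : OrderedPartition q s} {κ : ℝ} (hκ : κ ≠ 0) (hne : (face q s J).Nonempty) {k : Fin s}
    {j j' : Fin q} (hj : j ∈ J.blocks k) (hj' : j' ∈ J.blocks k) :
    EuclideanSpace.single j 1 - EuclideanSpace.single j' 1 ∈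
      (affineSpan ℝ (κ • face q s J)).direction := by
  rcases eq_or_ne j j' with rfl | hjj'
  · simp
  obtain ⟨_, π, hπ, rfl⟩ := convexHull_nonempty_iff.mp hne
  have hvertex : ∀ ρ, compatiblePerm J ρ → κ • vertexPoint q ρ ∈ κ • face q s J :=
    fun ρ hρ => smul_mem_smul_set (subset_convexHull ℝ _ ⟨ρ, hρ, rfl⟩)
  have hdiff := AffineSubspace.vsub_mem_direction
    (subset_affineSpan ℝ _ (hvertex _ (hπ.trans_swap hj hj')))
    (subset_affineSpan ℝ _ (hvertex _ hπ))
  set μ : ℝ := ((π.symm j' : ℕ) : ℝ) - ((π.symm j : ℕ) : ℝ)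
  have hμ : μ ≠ 0 := sub_ne_zero.mpr fun h => hjj' <| π.symm.injective <|
    Fin.ext (Nat.cast_injective h).symm
  rw [vertexPoint_trans_swap, vsub_eq_sub, smul_add, add_sub_cancel_left, smul_smul] at hdiff
  have := (affineSpan ℝ _).direction.smul_mem (κ * μ)⁻¹ hdiff
  rwa [smul_smul, inv_mul_cancel₀ (mul_ne_zero hκ hμ), one_smul] at this

theorem add_single_sub_single_mem_permutohedron {q s : ℕ} {J : OrderedPartition q s}
    {k l : Fin s} (hkl : k < l) {j j' : Fin q} (hj : j ∈ J.blocks k) (hj' : j' ∈ J.blocks l)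
    {u : EuclideanSpace ℝ (Fin q)} (hu : u ∈ face q s J) :
    u + (EuclideanSpace.single j 1 - EuclideanSpace.single j' 1) ∈ permutohedron q := by
  set D : EuclideanSpace ℝ (Fin q) := EuclideanSpace.single j 1 - EuclideanSpace.single j' 1
  have hP : Convex ℝ (permutohedron q) := convex_convexHull ℝ _
  suffices hvertices : D +ᵥ {x | ∃ π, compatiblePerm J π ∧ x = vertexPoint q π} ⊆
      permutohedron q by
    have := convexHull_min hvertices hP
    rw [convexHull_vadd] at this
    simpa [add_comm] using this (vadd_mem_vadd_set hu)
  rintro _ ⟨_, ⟨π, hπ, rfl⟩, rfl⟩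
  set μ : ℝ := ((π.symm j' : ℕ) : ℝ) - ((π.symm j : ℕ) : ℝ)
  -- `π.symm j < π.symm j'`: the exchanged vertex is `P_π + μ • D` with `μ ≥ 1`.
  have hμ : 1 ≤ μ := by
    have := hπ.symm_lt_symm hkl hj hj'
    rw [Fin.lt_def] at this
    simp only [μ, le_sub_iff_add_le', ← Nat.cast_succ, Nat.cast_le]
    exact this
  have hswap : vertexPoint q π + μ • D ∈ permutohedron q := by
    rw [← vertexPoint_trans_swap]
    exact subset_convexHull ℝ _ ⟨_, rfl⟩
  have := hP.add_smul_mem (subset_convexHull ℝ _ ⟨π, rfl⟩) hswap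
    ⟨inv_nonneg.mpr (by linarith), inv_le_one_of_one_le₀ hμ⟩
  rwa [smul_smul, inv_mul_cancel₀ (by linarith), one_smul, add_comm] at this

theorem metricProj_differences_monotone_general (q s : ℕ)
    (κ : ℝ) (hκ : 0 < κ) (J : OrderedPartition q s)
    (c c' : EuclideanSpace ℝ (Fin q))
    (hc' : c' = metricProj (κ • permutohedron q) c)
    (hrel : c' ∈ intrinsicInterior ℝ (κ • face q s J)) :
    ∃ t : Fin s → ℝ, Monotone t ∧ ∀ k : Fin s, ∀ j ∈ J.blocks k, c j - c' j = t k := by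
  have hnormal : ∀ y ∈ κ • permutohedron q, ⟪c - c', y - c'⟫ ≤ 0 := fun y hy => hc' ▸
    real_inner_sub_metricProj_le_zero ((isCompact_permutohedron q).smul κ)
      ((convex_convexHull ℝ _).smul κ) (Set.range_nonempty _).convexHull.smul_set c hy
  obtain ⟨u, hu, hcu⟩ := Set.mem_smul_set.mp (intrinsicInterior_subset hrel)
  refine J.exists_monotone_eq_of_forall_le (fun j => c j - c' j) ?_ ?_
  · intro k j hj j' hj'
    have := real_inner_eq_zero_of_mem_intrinsicInterior hrel
      (single_sub_single_mem_direction_affineSpan_smul_face hκ.ne' ⟨u, hu⟩ hj hj')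
      fun y hy => hnormal y (smul_set_mono (face_subset_permutohedron J) hy)
    rw [real_inner_single_sub_single] at this
    simpa [sub_eq_zero] using this
  · intro k l hkl j hj j' hj'
    have := hnormal _ (smul_mem_smul_set (add_single_sub_single_mem_permutohedron hkl hj hj' hu))
    rw [smul_add, hcu, add_sub_cancel_left, real_inner_smul_right,
      real_inner_single_sub_single] at this
    simpa using nonpos_of_mul_nonpos_right this hκ

/-- if the metric projection `c′ = π_κ(c)` of `c` onto `κ·P^{q−1}` lies in
the relative interior of `κ·τ_J`, then there are reals `t_1 ≤ … ≤ t_s` with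
`c_j − c′_j = t_k` for every `j ∈ J_k`. -/
theorem metricProj_differences_monotone (q s : ℕ) (hq : 1 ≤ q)
    (κ : ℝ) (hκ : 0 < κ) (J : OrderedPartition q s)
    (c c' : EuclideanSpace ℝ (Fin q))
    (hc' : c' = metricProj (κ • permutohedron q) c)
    (hrel : c' ∈ intrinsicInterior ℝ (κ • face q s J)) :
    ∃ t : Fin s → ℝ, Monotone t ∧ ∀ k : Fin s, ∀ j ∈ J.blocks k, c j - c' j = t k :=
  metricProj_differences_monotone_general q s κ hκ J c c' hc' hrel

end
end

section
/- The function h is strictly increasing on [−ε/2, ε/2] with derivative h′(t) ≥ 1 for all t ∈ [−ε/2, ε/2], and h(−ε/2) = −1, h(ε/2) = 1; hence h restricts to a C^∞ diffeomorphism from the interval [−ε/2, ε/2] onto the interval [−1, 1]. -/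
open Set Pointwise

noncomputable section

/-- the function `h(t) = t + t_0 + Σ_{k=0}^{s} (t_{k+1} − t_k)·I_k(t)`
is strictly increasing on `[−ε/2, ε/2]` with `h′ ≥ 1` there, `h(−ε/2) = −1`,
`h(ε/2) = 1`; hence it restricts to a `C^∞` diffeomorphism `[−ε/2, ε/2] → [−1, 1]`. -/
theorem h_is_diffeomorphism (q s : ℕ) (hq : 1 ≤ q) (hs1 : 1 ≤ s) (hsq : s ≤ q)
    (r : ℕ → ℕ) (hr0 : r 0 = 0) (hrs : r s = q) (hrmono : ∀ k < s, r k < r (k + 1))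
    (ε : ℝ) (hε : 0 < ε)
    (t : ℕ → ℝ) (ht0 : t 0 = -1 + ε / 2) (htlast : t (s + 1) = 1 - ε / 2)
    (h01 : t 0 < t 1) (hchain : ∀ k, 1 ≤ k → k < s → t k ≤ t (k + 1))
    (hslast : t s < t (s + 1))
    (I : ℕ → ℝ → ℝ)
    (hIsmooth : ∀ k ≤ s, ContDiff ℝ (⊤ : ℕ∞) (I k))
    (hIderiv : ∀ k ≤ s, ∀ x : ℝ, 0 ≤ deriv (I k) x)
    (hI0 : ∀ k ≤ s, ∀ x : ℝ,
      x ≤ (2 * (((r k : ℝ) / ((q : ℝ) + 1) - 1 / 2) * ε)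
            + (((r k : ℝ) + 1) / ((q : ℝ) + 1) - 1 / 2) * ε) / 3 → I k x = 0)
    (hI1 : ∀ k ≤ s, ∀ x : ℝ,
      ((((r k : ℝ) / ((q : ℝ) + 1) - 1 / 2) * ε)
        + 2 * ((((r k : ℝ) + 1) / ((q : ℝ) + 1) - 1 / 2) * ε)) / 3 ≤ x → I k x = 1)
    (h : ℝ → ℝ)
    (hh : ∀ x : ℝ, h x = x + t 0 + ∑ k ∈ Finset.range (s + 1), (t (k + 1) - t k) * I k x) :
    StrictMonoOn h (Set.Icc (-(ε / 2)) (ε / 2)) ∧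
    (∀ x ∈ Set.Icc (-(ε / 2)) (ε / 2), 1 ≤ deriv h x) ∧
    h (-(ε / 2)) = -1 ∧ h (ε / 2) = 1 ∧
    Set.BijOn h (Set.Icc (-(ε / 2)) (ε / 2)) (Set.Icc (-1) 1) ∧
    ContDiff ℝ (⊤ : ℕ∞) h ∧
    ∃ g : ℝ → ℝ, ContDiffOn ℝ (⊤ : ℕ∞) g (Set.Icc (-1) 1) ∧
      (∀ x ∈ Set.Icc (-(ε / 2)) (ε / 2), g (h x) = x) ∧
      (∀ y ∈ Set.Icc (-1 : ℝ) 1, h (g y) = y) := by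

  have hq1 : (0:ℝ) < (q:ℝ) + 1 := by positivity
  have hfun : h = fun x => x + t 0 + ∑ k ∈ Finset.range (s + 1), (t (k + 1) - t k) * I k x :=
    funext hh
  have hmem : ∀ k ∈ Finset.range (s+1), k ≤ s := fun k hk =>
    Nat.lt_succ_iff.mp (Finset.mem_range.mp hk)
  have hsmooth : ContDiff ℝ (⊤ : ℕ∞) h := by
    rw [hfun]
    exact (contDiff_id.add contDiff_const).add
      (ContDiff.sum fun k hk => contDiff_const.mul (hIsmooth k (hmem k hk)))
  have hc : ∀ k ≤ s, 0 ≤ t (k+1) - t k := by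
    intro k hk
    rcases Nat.eq_or_lt_of_le hk with h1 | h1
    · subst h1; linarith
    · rcases Nat.eq_zero_or_pos k with h2 | h2
      · subst h2; linarith
      · linarith [hchain k h2 h1]
  have hderivh : ∀ x : ℝ,
      HasDerivAt h (1 + ∑ k ∈ Finset.range (s+1), (t (k+1) - t k) * deriv (I k) x) x := by
    intro x
    rw [hfun]
    exact ((hasDerivAt_id x).add_const (t 0)).add (HasDerivAt.fun_sum fun k hk =>
      ((((hIsmooth k (hmem k hk)).differentiable (by simp)) x).hasDerivAt).const_mul _)
  have hderiv1 : ∀ x : ℝ, 1 ≤ deriv h x := by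
    intro x
    rw [(hderivh x).deriv]
    have : 0 ≤ ∑ k ∈ Finset.range (s+1), (t (k+1) - t k) * deriv (I k) x :=
      Finset.sum_nonneg fun k hk => mul_nonneg (hc k (hmem k hk)) (hIderiv k (hmem k hk) x)
    linarith
  have hmono : StrictMono h := strictMono_of_deriv_pos fun x =>
    lt_of_lt_of_le one_pos (hderiv1 x)
  have hImono : ∀ k ≤ s, Monotone (I k) := fun k hk =>
    monotone_of_deriv_nonneg ((hIsmooth k hk).differentiable (by simp)) (hIderiv k hk)
  have hI_nonneg : ∀ k ≤ s, ∀ x, 0 ≤ I k x := by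
    intro k hk x
    set L := (2 * (((r k : ℝ) / ((q : ℝ) + 1) - 1 / 2) * ε)
            + (((r k : ℝ) + 1) / ((q : ℝ) + 1) - 1 / 2) * ε) / 3 with hL
    rcases le_total x L with hx | hx
    · rw [hI0 k hk x hx]
    · rw [← hI0 k hk L le_rfl]; exact hImono k hk hx
  have hI_le_one : ∀ k ≤ s, ∀ x, I k x ≤ 1 := by
    intro k hk x
    set R := ((((r k : ℝ) / ((q : ℝ) + 1) - 1 / 2) * ε)
        + 2 * ((((r k : ℝ) + 1) / ((q : ℝ) + 1) - 1 / 2) * ε)) / 3 with hR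
    rcases le_total R x with hx | hx
    · rw [hI1 k hk x hx]
    · rw [← hI1 k hk R le_rfl]; exact hImono k hk hx
  have hrle : ∀ k ≤ s, r k ≤ q := by
    have H : ∀ m, m ≤ s → ∀ k ≤ m, r k ≤ r m := by
      intro m
      induction m with
      | zero =>
        intro _ k hk
        have : k = 0 := Nat.le_zero.mp hk
        subst this; exact le_rfl
      | succ m ih =>
        intro hm k hk
        by_cases h1 : k ≤ m
        · exact le_trans (ih (by omega) k h1) (le_of_lt (hrmono m (by omega)))
        · have h2 : k = m + 1 := by omega
          subst h2; exact le_rfl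
    intro k hk
    exact hrs ▸ H s le_rfl k hk
  have hval_neg : h (-(ε/2)) = -1 := by
    rw [hh]
    have hz : ∀ k ∈ Finset.range (s+1), (t (k+1) - t k) * I k (-(ε/2)) = 0 := by
      intro k hk
      have hk' := hmem k hk
      have h1 : 0 ≤ (r k : ℝ) / ((q:ℝ)+1) := by positivity
      have h2 : 0 ≤ ((r k : ℝ)+1) / ((q:ℝ)+1) := by positivity
      have := hI0 k hk' (-(ε/2)) (by nlinarith [mul_nonneg h1 hε.le, mul_nonneg h2 hε.le])
      rw [this, mul_zero]
    rw [Finset.sum_eq_zero hz]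
    linarith
  have hval_pos : h (ε/2) = 1 := by
    rw [hh]
    have heq : ∀ k ∈ Finset.range (s+1), (t (k+1) - t k) * I k (ε/2) = t (k+1) - t k := by
      intro k hk
      have hk' := hmem k hk
      have hrk : (r k : ℝ) ≤ q := Nat.cast_le.mpr (hrle k hk')
      have h1 : (r k : ℝ) / ((q:ℝ)+1) ≤ 1 := by rw [div_le_one hq1]; linarith
      have h2 : ((r k : ℝ)+1) / ((q:ℝ)+1) ≤ 1 := by rw [div_le_one hq1]; linarith
      have := hI1 k hk' (ε/2) (by nlinarith [mul_le_mul_of_nonneg_right h1 hε.le,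
        mul_le_mul_of_nonneg_right h2 hε.le])
      rw [this, mul_one]
    rw [Finset.sum_congr rfl heq, Finset.sum_range_sub]
    rw [htlast]
    ring
  have hub : ∀ x, h x ≤ x + t (s+1) := by
    intro x
    rw [hh]
    have hle : ∑ k ∈ Finset.range (s+1), (t (k+1) - t k) * I k x
        ≤ ∑ k ∈ Finset.range (s+1), (t (k+1) - t k) :=
      Finset.sum_le_sum fun k hk =>
        mul_le_of_le_one_right (hc k (hmem k hk)) (hI_le_one k (hmem k hk) x)
    rw [Finset.sum_range_sub] at hle
    linarith
  have hlb : ∀ x, x + t 0 ≤ h x := by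
    intro x
    rw [hh]
    have hge : 0 ≤ ∑ k ∈ Finset.range (s+1), (t (k+1) - t k) * I k x :=
      Finset.sum_nonneg fun k hk =>
        mul_nonneg (hc k (hmem k hk)) (hI_nonneg k (hmem k hk) x)
    linarith
  have hsurj : Function.Surjective h := by
    intro y
    have hab : y - t (s+1) ≤ y - t 0 := by
      have h0 : 0 ≤ ∑ k ∈ Finset.range (s+1), (t (k+1) - t k) :=
        Finset.sum_nonneg fun k hk => hc k (hmem k hk)
      rw [Finset.sum_range_sub] at h0
      linarith
    have h1 : h (y - t (s+1)) ≤ y := by have := hub (y - t (s+1)); linarith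
    have h2 : y ≤ h (y - t 0) := by have := hlb (y - t 0); linarith
    obtain ⟨x, _, hx⟩ := intermediate_value_Icc hab hsmooth.continuous.continuousOn ⟨h1, h2⟩
    exact ⟨x, hx⟩
  have hgleft : Function.LeftInverse (Function.invFun h) h :=
    Function.leftInverse_invFun hmono.injective
  have hgright : Function.RightInverse (Function.invFun h) h :=
    Function.rightInverse_invFun hsurj
  have hgsmooth : ContDiff ℝ (⊤ : ℕ∞) (Function.invFun h) := by
    rw [contDiff_iff_contDiffAt]
    intro y
    set x := Function.invFun h y with hxdef
    have hyx : h x = y := hgright y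
    have hne : deriv h x ≠ 0 := ne_of_gt (lt_of_lt_of_le one_pos (hderiv1 x))
    have hfd : HasFDerivAt h
        ((ContinuousLinearEquiv.unitsEquivAut ℝ (Units.mk0 (deriv h x) hne)) : ℝ →L[ℝ] ℝ) x :=
      ((hsmooth.differentiable (by simp) x).hasDerivAt).hasFDerivAt_equiv hne
    have hca : ContDiffAt ℝ (⊤ : ℕ∞) h x := hsmooth.contDiffAt
    have hli : ContDiffAt ℝ (⊤ : ℕ∞) (hca.localInverse hfd (by simp)) (h x) :=
      hca.to_localInverse hfd (by simp)
    rw [hyx] at hli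
    refine hli.congr_of_eventuallyEq ?_
    have hev : ∀ᶠ z in nhds y, h (hca.localInverse hfd (by simp) z) = z := by
      have := (hca.hasStrictFDerivAt' hfd (by simp)).eventually_right_inverse
      rwa [hyx] at this
    filter_upwards [hev] with z hz
    exact hmono.injective ((hgright z).trans hz.symm)
  refine ⟨hmono.strictMonoOn _, fun x _ => hderiv1 x, hval_neg, hval_pos, ?_, hsmooth,
    Function.invFun h, hgsmooth.contDiffOn, fun x _ => hgleft x, fun y _ => hgright y⟩
  refine ⟨?_, hmono.injective.injOn, ?_⟩
  · intro x hx
    constructor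
    · rw [← hval_neg]; exact hmono.monotone hx.1
    · rw [← hval_pos]; exact hmono.monotone hx.2
  · have := intermediate_value_Icc (by linarith : -(ε/2) ≤ ε/2) hsmooth.continuous.continuousOn
    rw [hval_neg, hval_pos] at this
    exact this


end
end
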